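/- Let R be a ring and M, N nonzero complexes of R-modules. Then qpd_R(M ⊕ N) ≤ max{ qpd_R M, qpd_R N }. -/

import Mathlib

open CategoryTheory Limits DirectSum

namespace QPDPaper

variable {R : Type} [Ring R]

/-- Complexes of `R`-modules. We use cochain complexes indexed by `ℤ`;
the *homological* degree `i` corresponds to the cohomological degree `-i`. -/
abbrev Cx (R : Type) [Ring R] := CochainComplex (ModuleCat.{0} R) ℤ

/-- The `i`-th homology of a complex, in homological (chain) convention. -/
noncomputable abbrev Hgy (M : Cx R) (i : ℤ) : ModuleCat R := M.homology (-i)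

/-- The component of `M` in homological degree `i`. -/
abbrev cmp (M : Cx R) (i : ℤ) : ModuleCat R := M.X (-i)

/-- `M` is exact in homological degree `i`, i.e. `H_i(M) = 0`. -/
def exactAt (M : Cx R) (i : ℤ) : Prop := IsZero (Hgy M i)

/-- `M` is exact (has vanishing homology). -/
def IsExact (M : Cx R) : Prop := ∀ i, exactAt M i

/-- `hsup M = h`: the top nonvanishing homological degree of `M` is `h`. -/
def hsupIs (M : Cx R) (h : ℤ) : Prop := ¬ exactAt M h ∧ ∀ i > h, exactAt M i

/-- `hinf M = l`: the bottom nonvanishing homological degree of `M` is `l`. -/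
def hinfIs (M : Cx R) (l : ℤ) : Prop := ¬ exactAt M l ∧ ∀ i < l, exactAt M i

/-- `M` has (homologically) bounded homology. -/
def hBounded (M : Cx R) : Prop := ∃ a b : ℤ, ∀ i, ¬ exactAt M i → a ≤ i ∧ i ≤ b

/-- `M` has degreewise finitely generated homology. -/
def hFG (M : Cx R) : Prop := ∀ i, Module.Finite R (Hgy M i)

/-- All components of `P` are projective modules. -/
def projComps (P : Cx R) : Prop := ∀ i : ℤ, Projective (P.X i)

/-- `sup P ≤ s`: the components of `P` vanish in homological degrees `> s`. -/
def supLE (P : Cx R) (s : ℤ) : Prop := ∀ i > s, IsZero (cmp P i)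

/-- `P` is bounded above (as a complex). -/
def boundedAbove (P : Cx R) : Prop := ∃ s : ℤ, supLE P s

/-- `P` is bounded (as a complex). -/
def boundedCx (P : Cx R) : Prop := ∃ a b : ℤ, ∀ i, ¬ IsZero (cmp P i) → a ≤ i ∧ i ≤ b

/-- `P` is a perfect complex: a bounded complex of finitely generated projectives. -/
def perfectCx (P : Cx R) : Prop :=
  projComps P ∧ (∀ i : ℤ, Module.Finite R (P.X i)) ∧ boundedCx P

/-- `pd_R M ≤ n`: there is a semi-projective resolution `P ⭢ M` with `P_v = 0` for
`v > n`.  (A bounded above complex of projectives is exactly a bounded above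
semi-projective complex.) -/
def pdLE (M : Cx R) (n : ℤ) : Prop :=
  ∃ (P : Cx R) (f : P ⟶ M), QuasiIso f ∧ projComps P ∧ supLE P n

def pdFinite (M : Cx R) : Prop := ∃ n, pdLE M n

/-- `pd_R M = n`. -/
def pdIs (M : Cx R) (n : ℤ) : Prop := IsLeast {m : ℤ | pdLE M m} n

/-- `P` is a quasi-projective resolution of `M`: a bounded above complex of
projectives (i.e. bounded above semi-projective complex) with
`H(P) ≅ ⊕_{i ≥ l} H(Σ^i M^{a_i})`, where the `a_i ≥ 0` are not all zero. -/
def IsQuasiProjRes (M P : Cx R) : Prop :=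
  projComps P ∧ boundedAbove P ∧
  ∃ (l : ℤ) (a : ℤ → ℕ), (∀ i, i < l → a i = 0) ∧ (∃ i, a i ≠ 0) ∧
    ∀ j : ℤ, Nonempty ((Hgy P j) ≃ₗ[R] (⨁ i : ℤ, (Fin (a i) → Hgy M (j - i))))

/-- `qpd_R M ≤ n`: there is a quasi-projective resolution `P` of `M` with
`sup P - hsup P ≤ n`. -/
def qpdLE (M : Cx R) (n : ℤ) : Prop :=
  ∃ (P : Cx R) (h : ℤ), IsQuasiProjRes M P ∧ hsupIs P h ∧ supLE P (h + n)

def qpdFinite (M : Cx R) : Prop := ∃ n, qpdLE M n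

/-- `qpd_R M = n`. -/
def qpdIs (M : Cx R) (n : ℤ) : Prop := IsLeast {m : ℤ | qpdLE M m} n

/-- A module viewed as a complex concentrated in degree `0`. -/
noncomputable def ofModule (N : ModuleCat R) : Cx R :=
  (HomologicalComplex.single (ModuleCat R) (ComplexShape.up ℤ) 0).obj N

/-- A f.g. module has finite quasi-projective dimension iff there is a bounded
complex of projectives whose homologies (not all zero) are finite direct sums of
copies of it; this is `qpdFinite (ofModule N)`. -/
noncomputable abbrev qpdModFinite (N : ModuleCat R) : Prop := qpdFinite (ofModule N)

/-- `H_n(RHom_R(K, M)) ≠ 0`, computed via a bounded above projective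
(i.e. semi-projective) resolution `P` of `K`: nonvanishing of homology of the
Hom complex in degree `n` means there is a nonzero morphism `P ⟶ Σⁿ M`
in the homotopy category. -/
def rhomNonzero (K M : Cx R) (n : ℤ) : Prop :=
  ∃ (P : Cx R) (f : P ⟶ K), projComps P ∧ boundedAbove P ∧ QuasiIso f ∧
    ∃ g : (HomotopyCategory.quotient (ModuleCat R) (ComplexShape.up ℤ)).obj P ⟶
      ((HomotopyCategory.quotient (ModuleCat R) (ComplexShape.up ℤ)).obj M)⟦n⟧, g ≠ 0

/-- `depth_R M = t`, where `depth_R M = - hsup RHom_R(k, M)` for the residue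
field `k` of the local ring `R`. -/
def depthIs (R : Type) [CommRing R] [IsLocalRing R] (M : Cx R) (t : ℤ) : Prop :=
  rhomNonzero (ofModule (ModuleCat.of R (IsLocalRing.ResidueField R))) M (-t) ∧
    ∀ n, rhomNonzero (ofModule (ModuleCat.of R (IsLocalRing.ResidueField R))) M n → n ≤ -t

/-- `depth R = t` for a local ring `R`. -/
def depthRingIs (R : Type) [CommRing R] [IsLocalRing R] (t : ℤ) : Prop :=
  depthIs R (ofModule (ModuleCat.of R R)) t

end QPDPaper
/-! Additivity of change-of-rings functors (needed to map complexes). -/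

instance resAdd {R S : Type} [Ring R] [Ring S] (f : R →+* S) :
    (ModuleCat.restrictScalars f).Additive :=
  { map_add := rfl }

instance extAdd {R S : Type} [CommRing R] [CommRing S] (f : R →+* S) :
    (ModuleCat.extendScalars f).Additive := by
  constructor
  intro M N g h
  apply ModuleCat.hom_ext
  apply LinearMap.ext
  intro x
  show ((ModuleCat.extendScalars f).map (g + h)) x
      = ((ModuleCat.extendScalars f).map g) x + ((ModuleCat.extendScalars f).map h) x
  induction x using TensorProduct.induction_on with
  | zero => erw [map_zero]; exact (add_zero 0).symm
  | tmul s m =>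
      show (s ⊗ₜ[R] ((g + h) m) : (ModuleCat.extendScalars f).obj N)
        = s ⊗ₜ[R] (g m) + s ⊗ₜ[R] (h m)
      rw [show (g + h) m = g m + h m from rfl, TensorProduct.tmul_add]
  | add a b iha ihb =>
      erw [map_add, iha, ihb, map_add, map_add]
      abel

namespace QPDPaper

/-- Restriction of scalars along `f : R →+* S`, on complexes. -/
noncomputable def resCx {R S : Type} [Ring R] [Ring S] (f : R →+* S) : Cx S ⥤ Cx R :=
  (ModuleCat.restrictScalars f).mapHomologicalComplex _

/-- Base change (extension of scalars) along `f : R →+* S`, on complexes. -/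
noncomputable def baseChangeCx {R S : Type} [CommRing R] [CommRing S] (f : R →+* S) :
    Cx R ⥤ Cx S :=
  (ModuleCat.extendScalars f).mapHomologicalComplex _

/-- `sup P = s`: the top degree of a nonzero component of `P` is exactly `s`. -/
def supIs {R : Type} [Ring R] (P : Cx R) (s : ℤ) : Prop :=
  ¬ IsZero (cmp P s) ∧ supLE P s

/-- `P` is a quasi-projective resolution *over `S`* of the `R`-complex `M`
(along a surjection `f : R →+* S` such that the homology of `M` consists of
`S`-modules): a bounded above complex `P` of projective `S`-modules such that
`H(P) ≅ ⊕_{i ≥ l} H(Σ^i M^{a_i})` as `R`-modules. -/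
def IsQuasiProjResOver {R S : Type} [Ring R] [Ring S] (f : R →+* S)
    (M : Cx R) (P : Cx S) : Prop :=
  projComps P ∧ boundedAbove P ∧
  ∃ (l : ℤ) (a : ℤ → ℕ), (∀ i, i < l → a i = 0) ∧ (∃ i, a i ≠ 0) ∧
    ∀ j : ℤ, Nonempty ((((ModuleCat.restrictScalars f).obj (Hgy P j)))
      ≃ₗ[R] (⨁ i : ℤ, (Fin (a i) → Hgy M (j - i))))

/-- `qpd_S M ≤ n` for an `R`-complex `M` whose homology is `S`-linear,
witnessed by quasi-projective resolutions over `S`. -/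
def qpdLEOver {R S : Type} [Ring R] [Ring S] (f : R →+* S) (M : Cx R) (n : ℤ) : Prop :=
  ∃ (P : Cx S) (h : ℤ), IsQuasiProjResOver f M P ∧ hsupIs P h ∧ supLE P (h + n)

/-- A complex over a (possibly noncommutative) local ring is minimal if the image
of each differential is contained in `𝔪 P` (`𝔪` = the nonunits). -/
def minimalCx {R : Type} [Ring R] (P : Cx R) : Prop :=
  ∀ i j : ℤ, ∀ y : P.X i, P.d i j y ∈
    Submodule.span R {z : P.X j | ∃ m : R, ¬ IsUnit m ∧ ∃ p : P.X j, z = m • p}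

/-- The Koszul complex `K(x; M) = K(x) ⊗_R M`, realized as the mapping cone of
multiplication by `x` on `M`. -/
noncomputable def koszulCx {R : Type} [CommRing R] (x : R) (M : Cx R) : Cx R :=
  CochainComplex.mappingCone (x • 𝟙 M)

/-- The total homology `H(M) = ⊕_n H_n(M)` of a complex, as a module. -/
noncomputable def totH {R : Type} [Ring R] (M : Cx R) : ModuleCat R :=
  ModuleCat.of R (⨁ i : ℤ, Hgy M i)

/-- A ring is left coherent if every finitely generated left ideal is
finitely presented. -/
def LeftCoherent (R : Type) [Ring R] : Prop :=
  ∀ I : Submodule R R, I.FG → Module.FinitePresentation R I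

/-- A (noetherian, local) ring is regular iff its maximal ideal is generated
by a regular sequence. -/
def IsRegLocal (Q : Type) [CommRing Q] [IsLocalRing Q] : Prop :=
  IsNoetherianRing Q ∧
    ∃ xs : List Q, RingTheory.Sequence.IsRegular Q xs ∧
      Ideal.ofList xs = IsLocalRing.maximalIdeal Q

end QPDPaper

/-!
If `H(P) ≅ ∏ₜ H(Σ^{aₜ} M)` and `H(Q) ≅ ∏ₛ H(Σ^{bₛ} N)`, then
`X = (⨁ₛ Σ^{bₛ} P) ⊕ (⨁ₜ Σ^{aₜ} Q)` is again a bounded above complex of projectives, with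
`H(X) ≅ ∏ₜₛ H(Σ^{aₜ + bₛ} (M ⊕ N))`. Its homology tops out at `max (hsup P + bₛ, hsup Q + aₜ)`,
and each summand stops at most `max m n` degrees above that, so `sup X - hsup X ≤ max m n`.
The families are finite because `H(P)` vanishes above `hsup P`: a nonzero multiplicity `aᵢ`
forces `H_{k+i}(P) ≠ 0` for any `k` with `Hₖ(M) ≠ 0`, and such `k` exist since `P` is not exact.
-/

namespace QPDPaper

open Finset

section DirectSum

variable {R : Type} [Ring R] {κ : Type} [DecidableEq κ]

lemma subsingleton_pi_iff {ι : Type} {V : ι → Type} [∀ t, Nonempty (V t)] :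
    Subsingleton (∀ t, V t) ↔ ∀ t, Subsingleton (V t) := by
  classical
  refine ⟨fun h t => ⟨fun x y => ?_⟩, fun _ => inferInstance⟩
  let g : ∀ t, V t := fun _ => Classical.arbitrary _
  simpa using congrFun (h.elim (Function.update g t x) (Function.update g t y)) t

def piCurryProd {α β : Type} (V : α → β → Type) [∀ a b, AddCommGroup (V a b)]
    [∀ a b, Module R (V a b)] : (∀ x : α × β, V x.1 x.2) ≃ₗ[R] ∀ a b, V a b where
  toFun f a b := f (a, b)
  invFun g x := g x.1 x.2
  map_add' _ _ := rfl
  map_smul' _ _ := rfl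

def piProdLinearEquivProdPi {α : Type} (A B : α → Type) [∀ i, AddCommGroup (A i)]
    [∀ i, Module R (A i)] [∀ i, AddCommGroup (B i)] [∀ i, Module R (B i)] :
    (∀ i, A i × B i) ≃ₗ[R] (∀ i, A i) × (∀ i, B i) :=
  { Equiv.arrowProdEquivProdArrow α A B with
    map_add' := fun _ _ => rfl
    map_smul' := fun _ _ => rfl }

def directSumLinearEquivPiFinset (S : Finset κ) (V : κ → Type)
    [∀ k, AddCommGroup (V k)] [∀ k, Module R (V k)] (hV : ∀ k ∉ S, Subsingleton (V k)) :
    (⨁ k, V k) ≃ₗ[R] ∀ k : S, V k where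
  toFun v k := v k
  invFun f := DFinsupp.mk S f
  map_add' _ _ := rfl
  map_smul' _ _ := rfl
  left_inv v := DFinsupp.ext fun k => by
    by_cases hk : k ∈ S
    · simp [DFinsupp.mk_apply, hk]
    · exact (hV k hk).elim _ _
  right_inv f := funext fun k => by simp [DFinsupp.mk_apply]

variable (V : κ → Type) [∀ k, AddCommGroup (V k)] [∀ k, Module R (V k)]

def directSumPowLinearEquivPiSigma (S : Finset κ) (a : κ → ℕ) (ha : ∀ k ∉ S, a k = 0) :
    (⨁ k, Fin (a k) → V k) ≃ₗ[R] ∀ t : Σ k : S, Fin (a k), V t.1 :=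
  (directSumLinearEquivPiFinset S _ fun k hk => by rw [ha k hk]; infer_instance).trans
    (LinearEquiv.piCurry R fun (k : S) (_ : Fin (a k)) => V k).symm

lemma subsingleton_of_subsingleton_directSumPow {a : κ → ℕ} {k : κ} (hk : a k ≠ 0)
    (hs : Subsingleton (⨁ k, Fin (a k) → V k)) : Subsingleton (V k) := by
  refine ⟨fun x y => ?_⟩
  have h := congrArg (fun v : ⨁ k, Fin (a k) → V k => v k ⟨0, Nat.pos_of_ne_zero hk⟩)
    (hs.elim (DirectSum.of _ k fun _ => x) (DirectSum.of _ k fun _ => y))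
  simpa using h

variable {ι : Type} [Fintype ι]

def fiberCard (d : ι → κ) (k : κ) : ℕ := Fintype.card {t // d t = k}

lemma fiberCard_ne_zero_iff {d : ι → κ} {k : κ} : fiberCard d k ≠ 0 ↔ ∃ t, d t = k := by
  rw [fiberCard, ← Nat.pos_iff_ne_zero, Fintype.card_pos_iff, nonempty_subtype]

noncomputable def equivSigmaFiberCard (d : ι → κ) : ι ≃ Σ k : univ.image d, Fin (fiberCard d k) :=
  (Equiv.sigmaFiberEquiv d).symm.trans <|
    (Equiv.sigmaCongrRight fun k => Fintype.equivFin {t // d t = k}).trans <|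
      (Equiv.sigmaSubtypeEquivOfSubset _ _ fun _ i => by
        simpa using fiberCard_ne_zero_iff.mp i.pos.ne').symm

noncomputable def directSumPowFiberCardLinearEquivPi (d : ι → κ) :
    (⨁ k, Fin (fiberCard d k) → V k) ≃ₗ[R] ∀ t, V (d t) :=
  (directSumPowLinearEquivPiSigma V (univ.image d) (fiberCard d) fun k hk => by
      by_contra h
      simpa using hk (by simpa using fiberCard_ne_zero_iff.mp h)).trans
    (LinearEquiv.piCongrLeft R (fun t => V t.1) (equivSigmaFiberCard d)).symm

end DirectSum

section Complexes

variable {R : Type} [Ring R]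

instance : HasFiniteBiproducts (Cx R) := HasFiniteBiproducts.of_hasFiniteProducts

lemma exactAt_iff_subsingleton {M : Cx R} {i : ℤ} : exactAt M i ↔ Subsingleton (Hgy M i) :=
  ModuleCat.isZero_iff_subsingleton

lemma supLE.mono {P : Cx R} {s s' : ℤ} (h : supLE P s) (hs : s ≤ s') : supLE P s' :=
  fun i hi => h i (by omega)

noncomputable def hgyShiftLinearEquiv (P : Cx R) (n j : ℤ) : Hgy (P⟦n⟧) j ≃ₗ[R] Hgy P (j - n) :=
  ((CochainComplex.ShiftSequence.shiftIso (ModuleCat R) n (-j) (-(j - n)) (by ring)).app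
    P).toLinearEquiv

noncomputable def hgyBiprodLinearEquiv (M N : Cx R) (j : ℤ) :
    Hgy (M ⊞ N) j ≃ₗ[R] Hgy M j × Hgy N j :=
  have := preservesBinaryBiproducts_of_preservesBiproducts
    (HomologicalComplex.homologyFunctor (ModuleCat R) (ComplexShape.up ℤ) (-j))
  ((HomologicalComplex.homologyFunctor _ _ (-j)).mapBiprod M N ≪≫
    ModuleCat.biprodIsoProd _ _).toLinearEquiv

variable {ι : Type} [Fintype ι] (F : ι → Cx R) (d : ι → ℤ)

noncomputable def shiftSum : Cx R := ⨁ fun t => (F t)⟦d t⟧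

noncomputable def hgyShiftSumLinearEquiv (j : ℤ) :
    Hgy (shiftSum F d) j ≃ₗ[R] ∀ t, Hgy (F t) (j - d t) :=
  ((HomologicalComplex.homologyFunctor _ _ (-j)).mapBiproduct _ ≪≫
    ModuleCat.biproductIsoPi _).toLinearEquiv.trans
  (LinearEquiv.piCongrRight fun t => hgyShiftLinearEquiv (F t) (d t) j)

noncomputable def shiftSumXIso (q : ℤ) :
    (shiftSum F d).X q ≅ ⨁ fun t => (F t).X (q + d t) :=
  (HomologicalComplex.eval _ _ q).mapBiproduct _ ≪≫
    biproduct.mapIso fun t => CochainComplex.shiftFunctorObjXIso (F t) (d t) q _ rfl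

lemma exactAt_shiftSum_iff {j : ℤ} :
    exactAt (shiftSum F d) j ↔ ∀ t, exactAt (F t) (j - d t) := by
  simp only [exactAt_iff_subsingleton,
    (hgyShiftSumLinearEquiv F d j).toEquiv.subsingleton_congr, subsingleton_pi_iff]

lemma hsupIs_shiftSum [Nonempty ι] {hs : ι → ℤ} (h : ∀ t, hsupIs (F t) (hs t)) :
    hsupIs (shiftSum F d) (univ.sup' univ_nonempty fun t => hs t + d t) := by
  obtain ⟨t₀, -, ht₀⟩ := exists_mem_eq_sup' univ_nonempty fun t => hs t + d t
  refine ⟨fun hex => (h t₀).1 ?_, fun i hi => (exactAt_shiftSum_iff F d).mpr fun t => ?_⟩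
  · simpa [ht₀] using (exactAt_shiftSum_iff F d).mp hex t₀
  · refine (h t).2 _ ?_
    have := le_sup' (fun t => hs t + d t) (mem_univ t)
    omega

lemma supLE_shiftSum {s : ℤ} (h : ∀ t, supLE (F t) (s - d t)) : supLE (shiftSum F d) s := by
  intro i hi
  refine IsZero.of_iso ?_ (shiftSumXIso F d (-i) ≪≫ ModuleCat.biproductIsoPi _)
  refine ModuleCat.isZero_iff_subsingleton.mpr (subsingleton_pi_iff.mpr fun t => ?_)
  exact ModuleCat.isZero_iff_subsingleton.mp
    ((h t (i - d t) (by omega)).of_iso ((F t).XIsoOfEq (by ring)))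

lemma supLE_shiftSum_sup' [Nonempty ι] {hs : ι → ℤ} {n : ℤ} (h : ∀ t, supLE (F t) (hs t + n)) :
    supLE (shiftSum F d) (univ.sup' univ_nonempty (fun t => hs t + d t) + n) :=
  supLE_shiftSum F d fun t =>
    (h t).mono (by have := le_sup' (fun t => hs t + d t) (mem_univ t); omega)

lemma projComps_shiftSum (h : ∀ t, projComps (F t)) : projComps (shiftSum F d) :=
  fun q =>
    have : ∀ t, Projective ((F t).X (q + d t)) := fun t => h t _
    Projective.of_iso (shiftSumXIso F d q).symm inferInstance

end Complexes

section QuasiProjRes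

variable {R : Type} [Ring R] {M N P Q : Cx R}

/-- `H(P) ≅ ∏ₜ H(Σ^{d t} M)`. A finite family of degrees `d` encodes the multiplicities
`aᵢ = #d⁻¹(i)` of `IsQuasiProjRes`, which makes products of such families easy to form. -/
def HomologyIsPiShift (M P : Cx R) {ι : Type} (d : ι → ℤ) : Prop :=
  ∀ j, Nonempty (Hgy P j ≃ₗ[R] ∀ t, Hgy M (j - d t))

lemma HomologyIsPiShift.shiftSum_sumElim {ι κ : Type} [Fintype ι] [Fintype κ] {da : ι → ℤ}
    {db : κ → ℤ} (hP : HomologyIsPiShift M P da) (hQ : HomologyIsPiShift N Q db) :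
    HomologyIsPiShift (M ⊞ N) (shiftSum (Sum.elim (fun _ : κ => P) fun _ : ι => Q) (Sum.elim db da))
      (fun x : ι × κ => da x.1 + db x.2) := by
  intro j
  have hgyCongr : ∀ (X : Cx R) {i i' : ℤ}, i = i' → (Hgy X i ≃ₗ[R] Hgy X i') :=
    fun X _ _ h => (eqToIso (congrArg (Hgy X) h)).toLinearEquiv
  have eM : (∀ t : κ, Hgy P (j - db t)) ≃ₗ[R] ∀ x : ι × κ, Hgy M (j - (da x.1 + db x.2)) :=
    (LinearEquiv.piCongrRight fun t => (hP (j - db t)).some).trans <|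
      (piCurryProd fun (t : κ) (s : ι) => Hgy M (j - db t - da s)).symm.trans <|
      (LinearEquiv.piCongrLeft R (fun y : κ × ι => Hgy M (j - db y.1 - da y.2))
        (Equiv.prodComm ι κ)).symm.trans <|
      LinearEquiv.piCongrRight fun x =>
        hgyCongr M (by simp only [Equiv.prodComm_apply, Prod.fst_swap, Prod.snd_swap]; ring)
  have eN : (∀ s : ι, Hgy Q (j - da s)) ≃ₗ[R] ∀ x : ι × κ, Hgy N (j - (da x.1 + db x.2)) :=
    (LinearEquiv.piCongrRight fun s => (hQ (j - da s)).some).trans <|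
      (piCurryProd fun (s : ι) (t : κ) => Hgy N (j - da s - db t)).symm.trans <|
      LinearEquiv.piCongrRight fun x => hgyCongr N (by ring)
  exact ⟨(hgyShiftSumLinearEquiv _ _ j).trans <|
    (LinearEquiv.sumPiEquivProdPi R κ ι _).trans <| (eM.prodCongr eN).trans <|
    (piProdLinearEquivProdPi _ _).symm.trans <|
    LinearEquiv.piCongrRight fun x => (hgyBiprodLinearEquiv M N _).symm⟩

lemma exists_finset_forall_notMem_eq_zero {a : ℤ → ℕ} {l h : ℤ} (hl : ∀ i, i < l → a i = 0)
    (e : ∀ j, Nonempty (Hgy P j ≃ₗ[R] ⨁ i, Fin (a i) → Hgy M (j - i))) (hsup : hsupIs P h) :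
    ∃ S : Finset ℤ, ∀ i ∉ S, a i = 0 := by
  have hexact : ∀ j, exactAt P j ↔ Subsingleton (⨁ i, Fin (a i) → Hgy M (j - i)) := fun j =>
    exactAt_iff_subsingleton.trans (e j).some.toEquiv.subsingleton_congr
  obtain ⟨k, hk⟩ : ∃ k, ¬ exactAt M k := by
    by_contra! hM
    have : ∀ i, Subsingleton (Hgy M (h - i)) := fun i => exactAt_iff_subsingleton.mp (hM _)
    exact hsup.1 ((hexact h).mpr inferInstance)
  refine ⟨Icc l (h - k), fun i hi => by_contra fun hai => hk ?_⟩
  have hli : l ≤ i := by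
    by_contra! hil
    exact hai (hl i hil)
  have hPi : exactAt P (k + i) := hsup.2 _ (by simp only [mem_Icc, not_and_or] at hi; omega)
  have := subsingleton_of_subsingleton_directSumPow _ hai ((hexact _).mp hPi)
  rw [add_sub_cancel_right] at this
  exact exactAt_iff_subsingleton.mpr this

lemma IsQuasiProjRes.exists_homologyIsPiShift {h : ℤ} (hP : IsQuasiProjRes M P)
    (hsup : hsupIs P h) :
    ∃ (ι : Type) (_ : Fintype ι) (_ : Nonempty ι) (d : ι → ℤ), HomologyIsPiShift M P d := by
  obtain ⟨-, -, l, a, hl, ⟨i₀, hi₀⟩, e⟩ := hP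
  obtain ⟨S, hS⟩ := exists_finset_forall_notMem_eq_zero hl e hsup
  have hi₀S : i₀ ∈ S := by
    by_contra hi₀S
    exact hi₀ (hS i₀ hi₀S)
  exact ⟨Σ k : S, Fin (a k), inferInstance, ⟨⟨⟨i₀, hi₀S⟩, ⟨0, Nat.pos_of_ne_zero hi₀⟩⟩⟩,
    fun t => t.1, fun j => ⟨(e j).some.trans (directSumPowLinearEquivPiSigma _ S a hS)⟩⟩

lemma IsQuasiProjRes.of_homologyIsPiShift {ι : Type} [Fintype ι] [Nonempty ι] {d : ι → ℤ}
    (hproj : projComps P) (hbdd : boundedAbove P) (h : HomologyIsPiShift M P d) :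
    IsQuasiProjRes M P := by
  obtain ⟨t₀, -, ht₀⟩ := exists_min_image univ d univ_nonempty
  refine ⟨hproj, hbdd, d t₀, fiberCard d, fun i hi => ?_,
    ⟨d t₀, fiberCard_ne_zero_iff.mpr ⟨t₀, rfl⟩⟩, fun j => ?_⟩
  · by_contra hne
    obtain ⟨t, rfl⟩ := fiberCard_ne_zero_iff.mp hne
    exact (ht₀ t (mem_univ t)).not_gt hi
  · exact ⟨(h j).some.trans (directSumPowFiberCardLinearEquivPi (fun k => Hgy M (j - k)) d).symm⟩

end QuasiProjRes

end QPDPaper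

open QPDPaper in
theorem qpd_biprod_le_max_general {R : Type} [Ring R] (M N : Cx R) (m n : ℤ)
    (h1 : qpdLE M m) (h2 : qpdLE N n) :
    qpdLE (M ⊞ N) (max m n) := by
  obtain ⟨P, hP, resP, hsupP, supP⟩ := h1
  obtain ⟨Q, hQ, resQ, hsupQ, supQ⟩ := h2
  obtain ⟨ι, _, _, da, hda⟩ := resP.exists_homologyIsPiShift hsupP
  obtain ⟨κ, _, _, db, hdb⟩ := resQ.exists_homologyIsPiShift hsupQ
  let F : κ ⊕ ι → Cx R := Sum.elim (fun _ => P) fun _ => Q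
  let d : κ ⊕ ι → ℤ := Sum.elim db da
  let hs : κ ⊕ ι → ℤ := Sum.elim (fun _ => hP) fun _ => hQ
  have hproj : ∀ t, projComps (F t) := by rintro (t | s); exacts [resP.1, resQ.1]
  have hsup : ∀ t, hsupIs (F t) (hs t) := by rintro (t | s); exacts [hsupP, hsupQ]
  have hsupLE : ∀ t, supLE (F t) (hs t + max m n) := by
    rintro (t | s)
    exacts [supP.mono (by simp [hs]), supQ.mono (by simp [hs])]
  exact ⟨shiftSum F d, _,
    .of_homologyIsPiShift (projComps_shiftSum F d hproj) ⟨_, supLE_shiftSum_sup' F d hsupLE⟩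
      (hda.shiftSum_sumElim hdb),
    hsupIs_shiftSum F d hsup, supLE_shiftSum_sup' F d hsupLE⟩

open QPDPaper in
/-- `qpd_R (M ⊕ N) ≤ max (qpd_R M) (qpd_R N)` for nonzero
complexes `M`, `N`. -/
theorem qpd_biprod_le_max {R : Type} [Ring R] (M N : Cx R)
    (hM : ¬ IsExact M) (hN : ¬ IsExact N) (m n : ℤ)
    (h1 : qpdLE M m) (h2 : qpdLE N n) :
    qpdLE (M ⊞ N) (max m n) :=
  qpd_biprod_le_max_general M N m n h1 h2
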